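/- Let {x_i}_{i=1}^m be a unit-norm frame for ℝ⁴. Suppose there exist four linearly independent vectors x_1, x_2, x_3, x_4 among the frame vectors such that ⟨x_2, x_4⟩ = 0, ⟨x_3, x_4⟩ = 0, and ⟨x_1, x_4⟩ ≠ 0. Then {x_i}_{i=1}^m is piecewise scalable: there exist an orthogonal projection P on ℝ⁴ and real constants a_1,...,a_m, b_1,...,b_m such that {a_i P x_i + b_i (I−P) x_i}_{i=1}^m is a Parseval frame for ℝ⁴. -/

import Mathlib

/-!
Choose a unit vector `z ⊥ x₄` with `⟪z, x₁⟫ ≠ 0` and `⟪z, x₂⟫ ⟪z, x₃⟫ = ⟪x₂, x₃⟫`, and let `P`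
be the orthogonal projection onto `ℝ z`. Then `P x₁`, `(I - P) x₂`, `(I - P) x₃` and
`(I - P) x₄ = x₄` are nonzero and pairwise orthogonal, the middle pair because
`⟪(I - P) x₂, (I - P) x₃⟫ = ⟪x₂, x₃⟫ - ⟪z, x₂⟫ ⟪z, x₃⟫`. Normalising these four and giving every
other frame vector the coefficients `0` produces an orthonormal basis, hence a Parseval frame.

Such a `z` is `u + c f`: here `u` lies in the plane of `x₂, x₃`, solves the product equation and
has `‖u‖ < 1`, while `f` is the dual-basis vector of `x₁` with respect to `x₁, …, x₄`, so that
`f ⊥ x₂, x₃, x₄` and `⟪f, x₁⟫ ≠ 0`; the sign of `c` is chosen to keep `⟪z, x₁⟫ ≠ 0`.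
-/

open scoped RealInnerProductSpace
open Finset

noncomputable section

/-- A finite family of vectors in `ℝⁿ` is a Parseval frame if
`∑ i, ⟪x, v i⟫² = ‖x‖²` for all `x`. -/
def IsParseval {n : ℕ} {ι : Type} [Fintype ι] (v : ι → EuclideanSpace ℝ (Fin n)) : Prop :=
  ∀ x : EuclideanSpace ℝ (Fin n), ∑ i, ⟪x, v i⟫ ^ 2 = ‖x‖ ^ 2

/-- `P` is an orthogonal projection: idempotent and self-adjoint. -/
def IsOrthProj {n : ℕ} (P : EuclideanSpace ℝ (Fin n) →ₗ[ℝ] EuclideanSpace ℝ (Fin n)) : Prop :=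
  P ∘ₗ P = P ∧ ∀ x y : EuclideanSpace ℝ (Fin n), ⟪P x, y⟫ = ⟪x, P y⟫

section UnitVectors

variable {E : Type*} [NormedAddCommGroup E] [InnerProductSpace ℝ E]

theorem norm_sub_inner_smul_sq {z : E} (hz : ‖z‖ = 1) (x : E) :
    ‖x - ⟪z, x⟫ • z‖ ^ 2 = ‖x‖ ^ 2 - ⟪z, x⟫ ^ 2 := by
  rw [norm_sub_sq_real, norm_smul, real_inner_smul_right, hz, real_inner_comm, Real.norm_eq_abs,
    mul_one, sq_abs]
  ring

theorem sq_inner_lt_one_iff_sub_inner_smul_ne_zero {x z : E} (hx : ‖x‖ = 1) (hz : ‖z‖ = 1) :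
    ⟪z, x⟫ ^ 2 < 1 ↔ x - ⟪z, x⟫ • z ≠ 0 := by
  rw [← norm_ne_zero_iff, ← sq_pos_iff, norm_sub_inner_smul_sq hz, hx, one_pow, sub_pos]

theorem sq_inner_lt_one_of_linearIndependent {x y : E} (hx : ‖x‖ = 1) (hy : ‖y‖ = 1)
    (hxy : LinearIndependent ℝ ![x, y]) : ⟪x, y⟫ ^ 2 < 1 := by
  rw [sq_inner_lt_one_iff_sub_inner_smul_ne_zero hy hx]
  intro h
  have := LinearIndependent.pair_iff.1 hxy (-⟪x, y⟫) 1 (by rw [← h]; module)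
  exact one_ne_zero this.2

theorem inner_smul_sub_inner_smul {z : E} (hz : ‖z‖ = 1) (c : ℝ) (y : E) :
    ⟪c • z, y - ⟪z, y⟫ • z⟫ = 0 := by
  rw [real_inner_smul_left, inner_sub_right, real_inner_smul_right,
    inner_self_eq_one_of_norm_eq_one hz]
  ring

theorem inner_sub_inner_smul_smul {z : E} (hz : ‖z‖ = 1) (y : E) (c : ℝ) :
    ⟪y - ⟪z, y⟫ • z, c • z⟫ = 0 := by
  rw [real_inner_comm, inner_smul_sub_inner_smul hz]

theorem inner_sub_inner_smul_sub_inner_smul {z : E} (hz : ‖z‖ = 1) (x y : E) :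
    ⟪x - ⟪z, x⟫ • z, y - ⟪z, y⟫ • z⟫ = ⟪x, y⟫ - ⟪z, x⟫ * ⟪z, y⟫ := by
  simp only [inner_sub_left, inner_sub_right, real_inner_smul_left, real_inner_smul_right,
    inner_self_eq_one_of_norm_eq_one hz, real_inner_comm x z]
  ring

theorem pairwise_inner_eq_zero_of_inner_mul_inner_eq {z x₁ x₂ x₃ x₄ : E} (hz : ‖z‖ = 1)
    (h₂₃ : ⟪z, x₂⟫ * ⟪z, x₃⟫ = ⟪x₂, x₃⟫) (h₂₄ : ⟪x₂, x₄⟫ = 0) (h₃₄ : ⟪x₃, x₄⟫ = 0)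
    (hz₄ : ⟪z, x₄⟫ = 0) :
    Pairwise fun k l => ⟪![⟪z, x₁⟫ • z, x₂ - ⟪z, x₂⟫ • z, x₃ - ⟪z, x₃⟫ • z,
      x₄ - ⟪z, x₄⟫ • z] k, ![⟪z, x₁⟫ • z, x₂ - ⟪z, x₂⟫ • z, x₃ - ⟪z, x₃⟫ • z,
      x₄ - ⟪z, x₄⟫ • z] l⟫ = 0 := by
  intro k l hkl
  fin_cases k <;> fin_cases l <;>
    simp only [Fin.zero_eta, Fin.isValue, Fin.mk_one, Fin.reduceFinMk, Matrix.cons_val_zero,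
      Matrix.cons_val_one, Matrix.cons_val, ne_eq, not_true_eq_false,
      inner_smul_sub_inner_smul hz, inner_sub_inner_smul_smul hz,
      inner_sub_inner_smul_sub_inner_smul hz] at hkl ⊢
  all_goals simp [real_inner_comm x₂ x₄, real_inner_comm x₃ x₄, real_inner_comm x₂ x₃, h₂₄, h₃₄,
    hz₄, ← h₂₃, mul_comm]

theorem exists_mem_span_pair_inner_mul_inner_eq {x y : E} (hx : ‖x‖ = 1) (hy : ‖y‖ = 1)
    (hxy : ⟪x, y⟫ ^ 2 < 1) :
    ∃ u ∈ Submodule.span ℝ {x, y}, ‖u‖ < 1 ∧ ⟪u, x⟫ * ⟪u, y⟫ = ⟪x, y⟫ ∧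
      ⟪u, x⟫ ^ 2 < 1 ∧ ⟪u, y⟫ ^ 2 < 1 := by
  set d := ⟪x, y⟫
  set k := (√(2 * (1 + d ^ 2)))⁻¹
  set u := k • (x + d • y)
  have hk : k ^ 2 * (2 * (1 + d ^ 2)) = 1 := by
    rw [inv_pow, Real.sq_sqrt (by positivity)]
    field_simp
  have hk' : 0 < k ^ 2 * (1 - d ^ 2) := mul_pos (by positivity) (by linarith)
  have hux : ⟪u, x⟫ = k * (1 + d ^ 2) := by
    simp only [u, inner_add_left, real_inner_smul_left, inner_self_eq_one_of_norm_eq_one hx,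
      real_inner_comm x y]
    ring
  have huy : ⟪u, y⟫ = 2 * k * d := by
    simp only [u, inner_add_left, real_inner_smul_left, inner_self_eq_one_of_norm_eq_one hy]
    ring
  have huu : ‖u‖ ^ 2 = k ^ 2 * (1 + 3 * d ^ 2) := by
    rw [← real_inner_self_eq_norm_sq]
    simp only [u, inner_add_left, inner_add_right, real_inner_smul_left, real_inner_smul_right,
      inner_self_eq_one_of_norm_eq_one hx, inner_self_eq_one_of_norm_eq_one hy,
      real_inner_comm x y]
    ring
  refine ⟨u, Submodule.smul_mem _ _ (Submodule.add_mem _ (Submodule.subset_span (by simp))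
    (Submodule.smul_mem _ _ (Submodule.subset_span (by simp)))), ?_, ?_, ?_, ?_⟩
  · nlinarith [norm_nonneg u]
  · rw [hux, huy]
    linear_combination d * hk
  · rw [hux]
    nlinarith
  · rw [huy]
    nlinarith

theorem exists_norm_add_smul_eq_one_inner_ne_zero {u f y : E} (hu : ‖u‖ < 1)
    (huf : ⟪u, f⟫ = 0) (hfy : ⟪f, y⟫ ≠ 0) :
    ∃ c : ℝ, ‖u + c • f‖ = 1 ∧ ⟪u + c • f, y⟫ ≠ 0 := by
  have hf : ‖f‖ ≠ 0 := norm_ne_zero_iff.2 fun h => hfy (by rw [h, inner_zero_left])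
  set c₀ := √(1 - ‖u‖ ^ 2) / ‖f‖
  have hc₀ : 0 < c₀ := div_pos (Real.sqrt_pos.2 (by nlinarith [norm_nonneg u])) (by positivity)
  have hnorm : ∀ c : ℝ, c ^ 2 = c₀ ^ 2 → ‖u + c • f‖ = 1 := by
    intro c hc
    have hsq : ‖u + c • f‖ ^ 2 = 1 := by
      rw [norm_add_sq_real, real_inner_smul_right, huf, norm_smul, mul_pow, Real.norm_eq_abs,
        sq_abs, hc, div_pow, Real.sq_sqrt (by nlinarith [norm_nonneg u])]
      field_simp
      ring
    nlinarith [norm_nonneg (u + c • f)]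
  by_cases h : ⟪u + c₀ • f, y⟫ = 0
  · refine ⟨-c₀, hnorm _ (by ring), fun h' => ?_⟩
    simp only [inner_add_left, real_inner_smul_left] at h h'
    exact hfy ((mul_eq_zero.1 (by linarith : c₀ * ⟪f, y⟫ = 0)).resolve_left hc₀.ne')
  · exact ⟨c₀, hnorm _ rfl, h⟩

theorem exists_unit_inner_mul_inner_eq {x₁ x₂ x₃ x₄ f : E} (h₂ : ‖x₂‖ = 1) (h₃ : ‖x₃‖ = 1)
    (h₂₃ : ⟪x₂, x₃⟫ ^ 2 < 1) (h₂₄ : ⟪x₂, x₄⟫ = 0) (h₃₄ : ⟪x₃, x₄⟫ = 0) (hf₁ : ⟪f, x₁⟫ ≠ 0)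
    (hf₂ : ⟪f, x₂⟫ = 0) (hf₃ : ⟪f, x₃⟫ = 0) (hf₄ : ⟪f, x₄⟫ = 0) :
    ∃ z : E, ‖z‖ = 1 ∧ ⟪z, x₁⟫ ≠ 0 ∧ ⟪z, x₄⟫ = 0 ∧ ⟪z, x₂⟫ * ⟪z, x₃⟫ = ⟪x₂, x₃⟫ ∧
      ⟪z, x₂⟫ ^ 2 < 1 ∧ ⟪z, x₃⟫ ^ 2 < 1 := by
  obtain ⟨u, hu, hu1, hprod, hu2, hu3⟩ := exists_mem_span_pair_inner_mul_inner_eq h₂ h₃ h₂₃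
  obtain ⟨a, b, rfl⟩ := Submodule.mem_span_pair.1 hu
  obtain ⟨c, hz, hz1⟩ := exists_norm_add_smul_eq_one_inner_ne_zero hu1
    (by rw [real_inner_comm, inner_add_right, real_inner_smul_right, real_inner_smul_right, hf₂,
      hf₃, mul_zero, mul_zero, add_zero]) hf₁
  have hperp : ∀ x, ⟪f, x⟫ = 0 → ⟪a • x₂ + b • x₃ + c • f, x⟫ = ⟪a • x₂ + b • x₃, x⟫ := by
    intro x hx
    rw [inner_add_left, real_inner_smul_left, hx, mul_zero, add_zero]
  refine ⟨_, hz, hz1, ?_, ?_⟩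
  · rw [hperp _ hf₄]
    simp only [inner_add_left, real_inner_smul_left, h₂₄, h₃₄]
    ring
  · rw [hperp _ hf₂, hperp _ hf₃]
    exact ⟨hprod, hu2, hu3⟩

theorem exists_inner_eq_ite_of_linearIndependent [FiniteDimensional ℝ E] {ι : Type*} [Fintype ι]
    [DecidableEq ι] {v : ι → E} (hv : LinearIndependent ℝ v)
    (hcard : Fintype.card ι = Module.finrank ℝ E) (i₀ : ι) :
    ∃ f : E, ∀ i, ⟪f, v i⟫ = if i = i₀ then 1 else 0 := by
  let b := basisOfLinearIndependentOfCardEqFinrank' v hv hcard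
  refine ⟨(InnerProductSpace.toDual ℝ E).symm (LinearMap.toContinuousLinearMap (b.coord i₀)),
    fun i => ?_⟩
  have hb : b i = v i := by simp [b]
  rw [InnerProductSpace.toDual_symm_apply, LinearMap.coe_toContinuousLinearMap', ← hb,
    b.coord_apply, b.repr_self, Finsupp.single_apply, eq_comm]

theorem orthonormal_inv_norm_smul {ι : Type*} {W : ι → E}
    (horth : Pairwise fun i j => ⟪W i, W j⟫ = 0) (hne : ∀ i, W i ≠ 0) :
    Orthonormal ℝ fun i => ‖W i‖⁻¹ • W i :=
  ⟨fun i => norm_smul_inv_norm (hne i), fun i j hij => by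
    simp [real_inner_smul_left, real_inner_smul_right, horth hij]⟩

end UnitVectors

section Frames

variable {n : ℕ} {ι : Type} [Fintype ι]

theorem isParseval_of_orthonormal {v : ι → EuclideanSpace ℝ (Fin n)} (hv : Orthonormal ℝ v)
    (hcard : Fintype.card ι = n) : IsParseval v := by
  intro y
  let b := OrthonormalBasis.mk hv
    (hv.linearIndependent.span_eq_top_of_card_eq_finrank' (by simp [hcard])).ge
  rw [← real_inner_self_eq_norm_sq, ← b.sum_inner_mul_inner y y]
  simp [b, sq, real_inner_comm]

theorem IsParseval.of_injective {κ : Type} [Fintype κ] {V : κ → EuclideanSpace ℝ (Fin n)}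
    (hV : IsParseval V) {v : ι → EuclideanSpace ℝ (Fin n)} {e : κ → ι} (he : e.Injective)
    (hv : ∀ i ∉ Set.range e, v i = 0) (hvV : ∀ k, v (e k) = V k) : IsParseval v := by
  intro y
  rw [← hV y]
  exact (Fintype.sum_of_injective e he _ _ (fun i hi => by simp [hv i hi])
    (fun k => by rw [hvV])).symm

theorem isOrthProj_starProjection (K : Submodule ℝ (EuclideanSpace ℝ (Fin n))) :
    IsOrthProj (K.starProjection : EuclideanSpace ℝ (Fin n) →ₗ[ℝ] EuclideanSpace ℝ (Fin n)) :=
  ⟨ContinuousLinearMap.IsIdempotentElem.toLinearMap K.isIdempotentElem_starProjection,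
    K.inner_starProjection_left_eq_right⟩

theorem exists_isParseval_of_pairwise_orthogonal (x : ι → EuclideanSpace ℝ (Fin n))
    (P : EuclideanSpace ℝ (Fin n) →ₗ[ℝ] EuclideanSpace ℝ (Fin n)) {e : Fin n → ι}
    (he : e.Injective) (W : Fin n → EuclideanSpace ℝ (Fin n))
    (hW : ∀ k, W k = P (x (e k)) ∨ W k = x (e k) - P (x (e k)))
    (horth : Pairwise fun k l => ⟪W k, W l⟫ = 0) (hne : ∀ k, W k ≠ 0) :
    ∃ a b : ι → ℝ, IsParseval fun i => a i • P (x i) + b i • (x i - P (x i)) := by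
  classical
  refine ⟨Function.extend e (fun k => if W k = P (x (e k)) then ‖W k‖⁻¹ else 0) 0,
    Function.extend e (fun k => if W k = P (x (e k)) then 0 else ‖W k‖⁻¹) 0,
    (isParseval_of_orthonormal (orthonormal_inv_norm_smul horth hne)
      (Fintype.card_fin n)).of_injective he
      (fun i hi => by simp [Function.extend_apply' _ _ _ hi]) fun k => ?_⟩
  simp only [he.extend_apply]
  split_ifs with hk
  · rw [zero_smul, add_zero, hk]
  · rw [zero_smul, zero_add, (hW k).resolve_left hk]

end Frames

theorem stmt16_general {m : ℕ} (x : Fin m → EuclideanSpace ℝ (Fin 4))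
    (hnorm : ∀ i, ‖x i‖ = 1)
    (h4 : ∃ i₁ i₂ i₃ i₄ : Fin m,
      LinearIndependent ℝ ![x i₁, x i₂, x i₃, x i₄] ∧
      ⟪x i₂, x i₄⟫ = 0 ∧ ⟪x i₃, x i₄⟫ = 0 ∧ ⟪x i₁, x i₄⟫ ≠ 0) :
    ∃ P : EuclideanSpace ℝ (Fin 4) →ₗ[ℝ] EuclideanSpace ℝ (Fin 4),
      IsOrthProj P ∧ ∃ a b : Fin m → ℝ,
        IsParseval (fun i => a i • P (x i) + b i • (x i - P (x i))) := by
  obtain ⟨i₁, i₂, i₃, i₄, hLI, h₂₄, h₃₄, -⟩ := h4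
  have he : Function.Injective ![i₁, i₂, i₃, i₄] := by
    refine Function.Injective.of_comp (f := x) ?_
    convert hLI.injective using 1
    ext1 k
    fin_cases k <;> rfl
  have h₂₃ : ⟪x i₂, x i₃⟫ ^ 2 < 1 := by
    have hpair : ![x i₂, x i₃] = ![x i₁, x i₂, x i₃, x i₄] ∘ ![1, 2] := by
      ext1 k
      fin_cases k <;> rfl
    exact sq_inner_lt_one_of_linearIndependent (hnorm i₂) (hnorm i₃)
      (hpair ▸ hLI.comp _ (by decide))
  obtain ⟨f, hf⟩ := exists_inner_eq_ite_of_linearIndependent hLI (by simp) 0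
  obtain ⟨z, hz, hz₁, hz₄, hprod, hz₂, hz₃⟩ :=
    exists_unit_inner_mul_inner_eq (x₁ := x i₁) (f := f) (hnorm i₂) (hnorm i₃) h₂₃ h₂₄ h₃₄
      ((hf 0).trans_ne (by simp)) (by simpa using hf 1) (by simpa using hf 2)
      (by simpa using hf 3)
  let P : EuclideanSpace ℝ (Fin 4) →ₗ[ℝ] EuclideanSpace ℝ (Fin 4) := (ℝ ∙ z).starProjection
  have hPz : ∀ w, P w = ⟪z, w⟫ • z := Submodule.starProjection_unit_singleton ℝ hz
  refine ⟨P, isOrthProj_starProjection _, exists_isParseval_of_pairwise_orthogonal x P he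
    ![⟪z, x i₁⟫ • z, x i₂ - ⟪z, x i₂⟫ • z, x i₃ - ⟪z, x i₃⟫ • z, x i₄ - ⟪z, x i₄⟫ • z] ?_
    (pairwise_inner_eq_zero_of_inner_mul_inner_eq hz hprod h₂₄ h₃₄ hz₄) ?_⟩
  · intro k
    fin_cases k <;> simp [hPz]
  · intro k
    fin_cases k
    · exact smul_ne_zero hz₁ (norm_ne_zero_iff.1 (by rw [hz]; exact one_ne_zero))
    · exact (sq_inner_lt_one_iff_sub_inner_smul_ne_zero (hnorm i₂) hz).1 hz₂
    · exact (sq_inner_lt_one_iff_sub_inner_smul_ne_zero (hnorm i₃) hz).1 hz₃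
    · exact (sq_inner_lt_one_iff_sub_inner_smul_ne_zero (hnorm i₄) hz).1 (by simp [hz₄])

theorem stmt16 {m : ℕ} (x : Fin m → EuclideanSpace ℝ (Fin 4))
    (hframe : Submodule.span ℝ (Set.range x) = ⊤)
    (hnorm : ∀ i, ‖x i‖ = 1)
    (h4 : ∃ i₁ i₂ i₃ i₄ : Fin m,
      LinearIndependent ℝ ![x i₁, x i₂, x i₃, x i₄] ∧
      ⟪x i₂, x i₄⟫ = 0 ∧ ⟪x i₃, x i₄⟫ = 0 ∧ ⟪x i₁, x i₄⟫ ≠ 0) :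
    ∃ P : EuclideanSpace ℝ (Fin 4) →ₗ[ℝ] EuclideanSpace ℝ (Fin 4),
      IsOrthProj P ∧ ∃ a b : Fin m → ℝ,
        IsParseval (fun i => a i • P (x i) + b i • (x i - P (x i))) :=
  stmt16_general x hnorm h4
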